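/- Let Γ be a nonempty finite set and N a quadratic normalisation on Γ satisfying Condition (unit). Suppose that for all a, b, c, d ∈ Γ with N̄(cd) = ab one has σ_b ∘ σ_a = σ_d ∘ σ_c (i.e., the relations of the presented semigroup hold among the production functions). Then Condition (home) holds; precisely, for every length-three word w over Γ, N̄_{121}(w) = N̄_{2121}(w). -/
import Mathlib


namespace Stmt3

variable {α : Type}

/-- Apply the two-letter normalisation `nf` at (1-indexed) position `i` of a word. -/
def applyAtL (nf : α → α → List α) : ℕ → List α → List α
  | 1, x :: y :: s => nf x y ++ s
  | n + 2, x :: s => x :: applyAtL nf (n + 1) s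
  | _, w => w

/-- Apply the two-letter normalisation along a finite sequence of positions
(the first position in the list is applied first). -/
def seqApplyL (nf : α → α → List α) (l : List ℕ) (w : List α) : List α :=
  l.foldl (fun w i => applyAtL nf i w) w

/-- Production function of the Mealy automaton `M_{Γ,N}` with state `x`. -/
def prodFn (tau sig : α → α → α) : α → List α → List α
  | _, [] => []
  | x, i :: s => sig x i :: prodFn tau sig (tau i x) s

/-- Proposition `prop-home`, direction `⇒`: for a quadratic
normalisation `(Γ,N)` satisfying Condition (unit), if the relations of the presented
semigroup hold among the production functions (`N̄(cd) = ab` implies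
`σ_b ∘ σ_a = σ_d ∘ σ_c`), then Condition (home) holds:
`N̄_{121}(w) = N̄_{2121}(w)` for every length-three word `w`. -/
theorem home_of_relations_hold
    {Γ : Type} [Fintype Γ] [Nonempty Γ]
    (N : List Γ → List Γ) (tau sig : Γ → Γ → Γ) (e : Γ)
    (hlen : ∀ w : List Γ, (N w).length = w.length)
    (hone : ∀ x : Γ, N [x] = [x])
    (habs : ∀ u w v : List Γ, w ≠ [] → N (u ++ N w ++ v) = N (u ++ w ++ v))
    (hquad₁ : ∀ w : List Γ, w ≠ [] →
      (N w = w ↔ ∀ p s : List Γ, ∀ x y : Γ, w = p ++ [x, y] ++ s → N [x, y] = [x, y]))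
    (hquad₂ : ∀ w : List Γ, w ≠ [] →
      ∃ l : List ℕ, N w = seqApplyL (fun x y => N [x, y]) l w)
    (hNbar : ∀ x y : Γ, N [x, y] = [tau x y, sig y x])
    (hunit : ∀ w : List Γ, w ≠ [] →
      N (e :: w) = e :: N w ∧ N (w ++ [e]) = e :: N w)
    (hrel : ∀ a b c d : Γ, N [c, d] = [a, b] →
      ∀ s : List Γ, prodFn tau sig b (prodFn tau sig a s) =
        prodFn tau sig d (prodFn tau sig c s)) :
    ∀ x y z : Γ,
      seqApplyL (fun a b => N [a, b]) [1, 2, 1] [x, y, z] =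
        seqApplyL (fun a b => N [a, b]) [2, 1, 2, 1] [x, y, z] := by
  classical
  -- abbreviation for the two-letter normalisation
  set nf : Γ → Γ → List Γ := fun a b => N [a, b] with hnfdef
  -- trivial computation lemmas about applyAtL
  have hnil : ∀ i : ℕ, applyAtL nf i ([] : List Γ) = [] := by rintro (_ | _ | n) <;> rfl
  have hbig : ∀ (n : ℕ) (p q r : Γ), applyAtL nf (n + 3) [p, q, r] = [p, q, r] := by
    intro n p q r
    rcases n with _ | m
    · rfl
    · show p :: q :: r :: applyAtL nf (m + 1) [] = _
      rw [hnil]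
  -- components of a normal pair
  have Pcomp : ∀ a b : Γ, N [a, b] = [a, b] → tau a b = a ∧ sig b a = b := by
    intro a b h
    have h2 := (hNbar a b).symm.trans h
    simpa using h2
  -- N ∘ N = N on pairs, stated as : the pair N [a,b] is normal
  have Pidem : ∀ a b : Γ, N [tau a b, sig b a] = [tau a b, sig b a] := by
    intro a b
    have h := habs [] [a, b] [] (by simp)
    simp only [List.nil_append, List.append_nil] at h
    rw [hNbar] at h
    exact h
  -- unit facts
  have hue : ∀ x : Γ, tau e x = e ∧ sig x e = x := by
    intro x
    have h := (hunit [x] (by simp)).1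
    rw [hone] at h
    have h2 := (hNbar e x).symm.trans h
    simpa using h2
  have hue' : ∀ x : Γ, tau x e = e ∧ sig e x = x := by
    intro x
    have h := (hunit [x] (by simp)).2
    rw [hone] at h
    have h2 := (hNbar x e).symm.trans h
    simpa using h2
  have t1 : ∀ x : Γ, tau e x = e := fun x => (hue x).1
  have t2 : ∀ x : Γ, sig x e = x := fun x => (hue x).2
  have t3 : ∀ x : Γ, tau x e = e := fun x => (hue' x).1
  have t4 : ∀ x : Γ, sig e x = x := fun x => (hue' x).2
  -- a length-3 word with normal adjacent pairs is normal
  have normal3 : ∀ p q r : Γ, N [p, q] = [p, q] → N [q, r] = [q, r] →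
      N [p, q, r] = [p, q, r] := by
    intro p q r hpq hqr
    refine (hquad₁ [p, q, r] (by simp)).2 ?_
    intro pre suf xx yy heq
    rcases pre with _ | ⟨a1, _ | ⟨a2, pre⟩⟩
    · simp only [List.nil_append, List.cons_append] at heq
      injection heq with g1 heq; injection heq with g2 heq
      subst g1; subst g2; exact hpq
    · simp only [List.cons_append, List.nil_append] at heq
      injection heq with g1 heq; injection heq with g2 heq; injection heq with g3 heq
      subst g2; subst g3; exact hqr
    · exfalso
      have := congrArg List.length heq
      simp at this
      omega
  -- extracting normal pairs from a normal length-3 word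
  have pairs3 : ∀ p q r : Γ, N [p, q, r] = [p, q, r] →
      N [p, q] = [p, q] ∧ N [q, r] = [q, r] := by
    intro p q r h
    exact ⟨(hquad₁ [p, q, r] (by simp)).1 h [] [r] p q rfl,
           (hquad₁ [p, q, r] (by simp)).1 h [p] [] q r rfl⟩
  -- *** Key lemma (domino): if (a,b) is a normal pair then
  --     the pair (sig (tau b z) a, sig z b) is normal. ***
  have lemD : ∀ a b zz : Γ, N [a, b] = [a, b] →
      N [sig (tau b zz) a, sig zz b] = [sig (tau b zz) a, sig zz b] := by
    intro a b zz hab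
    obtain ⟨hab1, hab2⟩ := Pcomp a b hab
    set c := tau b zz with hc
    set d := sig zz b with hd
    set u := sig c a with hu
    set v := tau a c with hv
    set T := tau u d with hT
    -- consequences of the relations hypothesis with s = [a, e, e]
    have hbz : N [b, zz] = [c, d] := hNbar b zz
    have hr := hrel c d b zz hbz [a, e, e]
    simp only [prodFn] at hr
    rw [hab1, hab2] at hr
    simp only [t1, t2, t3, t4] at hr
    rw [← hc, ← hd] at hr
    rw [← hu, ← hv] at hr
    rw [← hT] at hr
    simp only [List.cons.injEq, and_true] at hr
    obtain ⟨e1, e2, e3⟩ := hr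
    -- various normal pairs
    have hPcd : N [c, d] = [c, d] := Pidem b zz
    have hPvu : N [v, u] = [v, u] := Pidem a c
    have hnud : N [u, d] = [T, d] := by rw [hNbar, e1]
    have hPTd : N [T, d] = [T, d] := by
      have h := Pidem u d
      rwa [e1] at h
    have hnvT : N [v, T] = [v, u] := by rw [hNbar, e3, e2]
    -- closure of the three candidate words under applyAtL
    have hnfac : nf a c = [v, u] := hNbar a c
    have step : ∀ (i : ℕ) (w : List Γ), (w = [a, c, d] ∨ w = [v, u, d] ∨ w = [v, T, d]) →
        (applyAtL nf i w = [a, c, d] ∨ applyAtL nf i w = [v, u, d] ∨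
          applyAtL nf i w = [v, T, d]) := by
      intro i w hw
      rcases i with _ | _ | _ | n
      · rcases hw with h | h | h <;> rw [h]
        · exact Or.inl rfl
        · exact Or.inr (Or.inl rfl)
        · exact Or.inr (Or.inr rfl)
      · rcases hw with h | h | h <;> rw [h] <;> right <;> left
        · show nf a c ++ [d] = [v, u, d]; rw [hnfac]; rfl
        · show nf v u ++ [d] = [v, u, d]; rw [show nf v u = [v, u] from hPvu]; rfl
        · show nf v T ++ [d] = [v, u, d]; rw [show nf v T = [v, u] from hnvT]; rfl
      · rcases hw with h | h | h <;> rw [h]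
        · left; show a :: (nf c d ++ []) = [a, c, d]
          rw [show nf c d = [c, d] from hPcd]; rfl
        · right; right; show v :: (nf u d ++ []) = [v, T, d]
          rw [show nf u d = [T, d] from hnud]; rfl
        · right; right; show v :: (nf T d ++ []) = [v, T, d]
          rw [show nf T d = [T, d] from hPTd]; rfl
      · rcases hw with h | h | h <;> rw [h]
        · exact Or.inl (hbig n a c d)
        · exact Or.inr (Or.inl (hbig n v u d))
        · exact Or.inr (Or.inr (hbig n v T d))
    have mem3 : ∀ (l : List ℕ) (w : List Γ),
        (w = [a, c, d] ∨ w = [v, u, d] ∨ w = [v, T, d]) →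
        (seqApplyL nf l w = [a, c, d] ∨ seqApplyL nf l w = [v, u, d] ∨
          seqApplyL nf l w = [v, T, d]) := by
      intro l
      induction l with
      | nil => intro w hw; exact hw
      | cons i l ih =>
          intro w hw
          exact ih (applyAtL nf i w) (step i w hw)
    -- conclude T = u
    obtain ⟨l, hl⟩ := hquad₂ [a, c, d] (by simp)
    have hWmem := mem3 l [a, c, d] (Or.inl rfl)
    rw [← hl] at hWmem
    have hWnorm : N (N [a, c, d]) = N [a, c, d] := by
      have h := habs [] [a, c, d] [] (by simp)
      simpa using h
    have hTu : T = u := by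
      rcases hWmem with h | h | h
      · -- N [a,c,d] = [a,c,d] : pair (a,c) is normal
        obtain ⟨p1, p2⟩ := Pcomp a c (pairs3 a c d h).1
        have hcd1 := (Pcomp c d hPcd).1
        rw [hT, hu, p2, hcd1]
      · -- N [a,c,d] = [v,u,d] : pair (u,d) is normal
        rw [h] at hWnorm
        have hp := (pairs3 v u d hWnorm).2
        rw [hT]; exact (Pcomp u d hp).1
      · -- N [a,c,d] = [v,T,d] : pair (v,T) is normal
        rw [h] at hWnorm
        have hp := (pairs3 v T d hWnorm).1
        have q := (Pcomp v T hp).2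
        exact q.symm.trans e2
    rw [hnud, hTu]
  -- *** applying applyAtL / seqApplyL does not change the N-image ***
  have appN : ∀ (w : List Γ) (i : ℕ) (u : List Γ),
      N (u ++ applyAtL nf i w) = N (u ++ w) := by
    intro w
    induction w with
    | nil => intro i u; rw [hnil]
    | cons x s ih =>
        intro i u
        rcases i with _ | _ | n
        · rfl
        · rcases s with _ | ⟨y, t⟩
          · rfl
          · show N (u ++ (N [x, y] ++ t)) = _
            have h := habs u [x, y] t (by simp)
            simpa [List.append_assoc] using h
        · show N (u ++ (x :: applyAtL nf (n + 1) s)) = _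
          have h := ih (n + 1) (u ++ [x])
          simpa [List.append_assoc] using h
  have seqN : ∀ (l : List ℕ) (w : List Γ), N (seqApplyL nf l w) = N w := by
    intro l
    induction l with
    | nil => intro w; rfl
    | cons i l ih =>
        intro w
        have h1 : seqApplyL nf (i :: l) w = seqApplyL nf l (applyAtL nf i w) := rfl
        rw [h1, ih]
        simpa using appN w i []
  -- *** the word N̄₁₂₁ [p,q,r] is always normal ***
  have norm121 : ∀ p q r : Γ,
      N (seqApplyL nf [1, 2, 1] [p, q, r]) = seqApplyL nf [1, 2, 1] [p, q, r] := by
    intro p q r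
    have hab : N [tau p q, sig q p] = [tau p q, sig q p] := Pidem p q
    set A := tau p q with hA
    set B := sig q p with hB
    set C := tau B r with hC
    set D := sig r B with hD
    have s1 : applyAtL nf 1 [p, q, r] = [A, B, r] := by
      show nf p q ++ [r] = [A, B, r]
      rw [show nf p q = [A, B] from hNbar p q]; rfl
    have s2 : applyAtL nf 2 [A, B, r] = [A, C, D] := by
      show A :: (nf B r ++ []) = [A, C, D]
      rw [show nf B r = [C, D] from hNbar B r]; rfl
    have s3 : applyAtL nf 1 [A, C, D] = [tau A C, sig C A, D] := by
      show nf A C ++ [D] = [tau A C, sig C A, D]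
      rw [show nf A C = [tau A C, sig C A] from hNbar A C]; rfl
    have hseq : seqApplyL nf [1, 2, 1] [p, q, r] = [tau A C, sig C A, D] := by
      show applyAtL nf 1 (applyAtL nf 2 (applyAtL nf 1 [p, q, r])) = _
      rw [s1, s2, s3]
    rw [hseq]
    exact normal3 _ _ _ (Pidem A C) (lemD A B r hab)
  -- *** conclusion ***
  intro x y z
  have h2121 : seqApplyL nf [2, 1, 2, 1] [x, y, z]
      = seqApplyL nf [1, 2, 1] (applyAtL nf 2 [x, y, z]) := rfl
  have hA2 : applyAtL nf 2 [x, y, z] = [x, tau y z, sig z y] := by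
    show x :: (nf y z ++ []) = [x, tau y z, sig z y]
    rw [show nf y z = [tau y z, sig z y] from hNbar y z]; rfl
  calc seqApplyL nf [1, 2, 1] [x, y, z]
      = N (seqApplyL nf [1, 2, 1] [x, y, z]) := (norm121 x y z).symm
    _ = N [x, y, z] := seqN _ _
    _ = N (applyAtL nf 2 [x, y, z]) := by simpa using (appN [x, y, z] 2 []).symm
    _ = N (seqApplyL nf [1, 2, 1] (applyAtL nf 2 [x, y, z])) := (seqN _ _).symm
    _ = seqApplyL nf [1, 2, 1] (applyAtL nf 2 [x, y, z]) := by
          rw [hA2]; exact norm121 x (tau y z) (sig z y)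
    _ = seqApplyL nf [2, 1, 2, 1] [x, y, z] := h2121.symm

end Stmt3
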